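/- An element A ∈ T has a right inverse (for the tree product) if and only if A has exactly one leaf (i.e., A ∈ F), and A ∈ T has a left inverse if and only if some leaf of A has color 1. -/

import Mathlib

/-!
Right multiplication sends a node to a node, so only a leaf `w` can have a right inverse, and it
has one because every `πᵢ`, hence every word, acts surjectively on `T`. Dually a left inverse of
`A` must be a leaf `w`, and `w • A = 1` means that the path `w` ends at a leaf of `A` whose color
is a suffix of `1`; conversely the path to a leaf of color `1` is a left inverse.
-/

/-- The free magma `T` on the free monoid `F` on π₁, π₂: finite nonempty ordered
binary trees with leaves colored by elements of `F`. -/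
inductive Tm : Type
  | leaf : FreeMonoid (Fin 2) → Tm
  | node : Tm → Tm → Tm

/-- The action of the generator πᵢ on `T`: it picks out the `i`-th subtree of a
node, and acts by left multiplication on (the color of) a single leaf. -/
def pact (i : Fin 2) : Tm → Tm
  | .leaf w => .leaf (FreeMonoid.of i * w)
  | .node A B => if i = 0 then A else B

/-- The left action of a word `w ∈ F` on `T`, applying the symbols of `w` one at
a time from right to left. -/
def wact (w : FreeMonoid (Fin 2)) (A : Tm) : Tm :=
  (FreeMonoid.toList w).foldr pact A

/-- The product on `T`: `A * B` replaces each leaf of `A` of color `w` by `w • B`. -/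
def tmul : Tm → Tm → Tm
  | .leaf w, B => wact w B
  | .node A₁ A₂, B => .node (tmul A₁ B) (tmul A₂ B)

/-- The identity of `T`: a single leaf colored by the empty word. -/
def tone : Tm := .leaf 1

/-- The list of leaves of a tree `A ∈ T`, in order, recorded as pairs
`(path, color)`: the path from the root to the leaf is described by the word
`path` read from right to left, and `color` is the color of the leaf. -/
def tleaves : Tm → List (FreeMonoid (Fin 2) × FreeMonoid (Fin 2))
  | .leaf w => [(1, w)]
  | .node A B =>
      ((tleaves A).map fun pc => (pc.1 * FreeMonoid.of 0, pc.2)) ++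
        ((tleaves B).map fun pc => (pc.1 * FreeMonoid.of 1, pc.2))

namespace FreeMonoid

theorem eq_one_or_exists_eq_mul_of {α : Type*} (w : FreeMonoid α) :
    w = 1 ∨ ∃ v a, w = v * of a := by
  rcases (toList w).eq_nil_or_concat with h | ⟨l, a, h⟩
  · exact Or.inl (toList.injective h)
  · exact Or.inr ⟨ofList l, a, toList.injective (by simpa using h)⟩

end FreeMonoid

namespace Tm

@[simp]
theorem wact_one (A : Tm) : wact 1 A = A := rfl

theorem wact_mul (v w : FreeMonoid (Fin 2)) (A : Tm) : wact (v * w) A = wact v (wact w A) :=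
  List.foldr_append

@[simp]
theorem wact_of (i : Fin 2) (A : Tm) : wact (.of i) A = pact i A := rfl

theorem wact_leaf (w u : FreeMonoid (Fin 2)) : wact w (.leaf u) = .leaf (w * u) := by
  induction w using FreeMonoid.inductionOn' with
  | one => simp
  | of_mul i w ih => simp [wact_mul, ih, pact, mul_assoc]

theorem pact_surjective (i : Fin 2) : Function.Surjective (pact i) :=
  fun C => ⟨.node C C, by simp only [pact]; split_ifs <;> rfl⟩

theorem wact_surjective (w : FreeMonoid (Fin 2)) : Function.Surjective (wact w) := by
  induction w using FreeMonoid.inductionOn' with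
  | one => exact Function.surjective_id
  | of_mul i w ih =>
    rw [show wact (.of i * w) = pact i ∘ wact w from funext (wact_mul _ _)]
    exact (pact_surjective i).comp ih

theorem wact_of_mem_tleaves {A : Tm} {pc : FreeMonoid (Fin 2) × FreeMonoid (Fin 2)}
    (h : pc ∈ tleaves A) : wact pc.1 A = .leaf pc.2 := by
  induction A generalizing pc with
  | leaf u =>
    obtain rfl : pc = (1, u) := by simpa [tleaves] using h
    rfl
  | node X Y ihX ihY =>
    simp only [tleaves, List.mem_append, List.mem_map] at h
    rcases h with ⟨qc, hq, rfl⟩ | ⟨qc, hq, rfl⟩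
    · simpa [wact_mul, pact] using ihX hq
    · simpa [wact_mul, pact] using ihY hq

theorem exists_mem_tleaves_of_wact_eq_leaf {A : Tm} {w u : FreeMonoid (Fin 2)}
    (h : wact w A = .leaf u) : ∃ pc ∈ tleaves A, ∃ v, u = v * pc.2 := by
  induction A generalizing w with
  | leaf u' =>
    rw [wact_leaf, leaf.injEq] at h
    exact ⟨(1, u'), by simp [tleaves], w, h.symm⟩
  | node X Y ihX ihY =>
    rcases w.eq_one_or_exists_eq_mul_of with rfl | ⟨v, i, rfl⟩
    · simp at h
    rw [wact_mul, wact_of, pact] at h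
    split_ifs at h
    · obtain ⟨pc, hpc, hu⟩ := ihX h
      exact ⟨(pc.1 * .of 0, pc.2), by simp [tleaves, hpc], hu⟩
    · obtain ⟨pc, hpc, hu⟩ := ihY h
      exact ⟨(pc.1 * .of 1, pc.2), by simp [tleaves, hpc], hu⟩

end Tm

/-- `A ∈ T` has a right inverse iff `A` is a single leaf, and a left inverse
iff some leaf of `A` has color `1`. -/
theorem tm_invertibility (A : Tm) :
    ((∃ B : Tm, tmul A B = tone) ↔ ∃ w, A = .leaf w) ∧
      ((∃ B : Tm, tmul B A = tone) ↔ ∃ pc ∈ tleaves A, pc.2 = 1) := by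
  refine ⟨⟨?_, ?_⟩, ⟨?_, ?_⟩⟩
  · rintro ⟨B, hB⟩
    cases A with
    | leaf w => exact ⟨w, rfl⟩
    | node => simp [tmul, tone] at hB
  · rintro ⟨w, rfl⟩
    exact Tm.wact_surjective w tone
  · rintro ⟨B, hB⟩
    cases B with
    | leaf w =>
      obtain ⟨pc, hpc, v, hv⟩ := Tm.exists_mem_tleaves_of_wact_eq_leaf hB
      exact ⟨pc, hpc, eq_one_of_mul_left' hv.symm⟩
    | node => simp [tmul, tone] at hB
  · rintro ⟨pc, hpc, hc⟩
    exact ⟨.leaf pc.1, by rw [tmul, Tm.wact_of_mem_tleaves hpc, hc, tone]⟩
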